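/- Consider the three-state machine PRC/WT/POA implementing a duration d: starting in PRC, it moves to WT when the precondition becomes true, stays in WT while the precondition remains true, returns to PRC if the precondition becomes false before d timesteps elapse in WT, and moves to POA after the precondition has held for d consecutive timesteps. Then at any timestep t, the machine is in state POA if and only if the precondition has held continuously for at least d consecutive timesteps up to and including t (i.e., pre(s) holds for all s with t - d < s ≤ t, assuming t ≥ d, or since some entry point). -/
import Mathlib


/-- States of the duration machine. -/
inductive DurState where
  | PRC | WT | POA
deriving DecidableEq

open DurState

/-- One step of the duration machine with duration `d`, given the current value
`p` of the precondition. The second component is the counter of consecutive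
timesteps during which the precondition has held. Entering from PRC, the counter
resets to 1 (transitioning immediately to POA if the duration is already
reached); in WT the counter increments while the precondition holds, moving to
POA once it reaches `d`; whenever the precondition is false the machine returns
to PRC. -/
def durStep (d : ℕ) (p : Bool) : DurState × ℕ → DurState × ℕ :=
  fun sc =>
    if p then
      match sc.1 with
      | PRC => if d ≤ 1 then (POA, 1) else (WT, 1)
      | WT => if d ≤ sc.2 + 1 then (POA, sc.2 + 1) else (WT, sc.2 + 1)
      | POA => (POA, sc.2 + 1)
    else (PRC, 0)

/-- The state trace of the duration machine on a precondition trace `pre`: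
initially WT (counter 1) if the precondition holds, PRC otherwise. -/
def durRun (d : ℕ) (pre : ℕ → Bool) : ℕ → DurState × ℕ
  | 0 => if pre 0 then (WT, 1) else (PRC, 0)
  | t + 1 => durStep d (pre (t + 1)) (durRun d pre t)

/-- Number of consecutive timesteps up to and including `t` during which `pre` holds. -/
def cnt (pre : ℕ → Bool) : ℕ → ℕ
  | 0 => if pre 0 then 1 else 0
  | t + 1 => if pre (t + 1) then cnt pre t + 1 else 0

lemma durRun_invariant (d : ℕ) (hd : 1 ≤ d) (pre : ℕ → Bool) :
    ∀ t, (durRun d pre t).2 = cnt pre t ∧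
      ((durRun d pre t).1 = PRC ↔ pre t = false) ∧
      ((durRun d pre t).1 = POA → d ≤ cnt pre t) ∧
      (1 ≤ t → d ≤ cnt pre t → (durRun d pre t).1 = POA) := by
  intro t
  induction t with
  | zero =>
    by_cases h : pre 0 = true <;> simp [durRun, cnt, h]
  | succ t ih =>
    obtain ⟨hc, hprc, hpoa, hpoa'⟩ := ih
    by_cases h : pre (t + 1) = true
    · have hct : cnt pre (t + 1) = cnt pre t + 1 := by simp [cnt, h]
      rcases hst : (durRun d pre t).1 with _ | _ | _
      · have hpt : pre t = false := hprc.mp hst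
        have hct0 : cnt pre t = 0 := by
          cases t <;> simp [cnt, hpt]
        by_cases hd1 : d ≤ 1 <;>
          · simp [durRun, durStep, h, hst, hd1, hct, hct0]
            try omega
      · have step : durRun d pre (t + 1)
            = if d ≤ cnt pre t + 1 then (POA, cnt pre t + 1)
              else (WT, cnt pre t + 1) := by
          simp [durRun, durStep, h, hst, hc]
        by_cases hd1 : d ≤ cnt pre t + 1 <;>
          · simp [step, hd1, hct, h]
            try omega
      · have := hpoa hst
        simp [durRun, durStep, h, hst, hct, hc]
        omega
    · have h' : pre (t + 1) = false := by simpa using h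
      simp [durRun, durStep, h', cnt]
      omega
  
lemma cnt_run (pre : ℕ → Bool) :
    ∀ t s, s ≤ t → t < s + cnt pre t → pre s = true := by
  intro t
  induction t with
  | zero =>
    intro s hs hlt
    interval_cases s
    by_cases h : pre 0 = true
    · exact h
    · simp [cnt, h] at hlt
  | succ t ih =>
    intro s hs hlt
    have hp : pre (t + 1) = true := by
      by_contra h
      simp [cnt, Bool.not_eq_true _ ▸ h] at hlt
      omega
    rcases eq_or_lt_of_le hs with rfl | hlt'
    · exact hp
    · have : cnt pre (t + 1) = cnt pre t + 1 := by simp [cnt, hp]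
      exact ih s (by omega) (by omega)

lemma cnt_of_run (pre : ℕ → Bool) :
    ∀ t k, k ≤ t + 1 → (∀ s, t < s + k → s ≤ t → pre s = true) →
      k ≤ cnt pre t := by
  intro t
  induction t with
  | zero =>
    intro k hk h
    interval_cases k
    · omega
    · have := h 0 (by omega) (by omega)
      simp [cnt, this]
  | succ t ih =>
    intro k hk h
    rcases k with _ | k'
    · omega
    · have hp : pre (t + 1) = true := h (t + 1) (by omega) le_rfl
      have hct : cnt pre (t + 1) = cnt pre t + 1 := by simp [cnt, hp]
      have := ih k' (by omega) (fun s hs hs' => h s (by omega) (by omega))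
      omega

/-- For any timestep t ≥ d, the duration machine is in POA at t if and only if
the precondition has held continuously during the last d consecutive timesteps
up to and including t (i.e., for all s with t - d < s ≤ t). -/
theorem durRun_POA_iff (d : ℕ) (hd : 1 ≤ d) (pre : ℕ → Bool) :
    ∀ t, d ≤ t →
      ((durRun d pre t).1 = POA ↔
        ∀ s, t < s + d → s ≤ t → pre s = true) := by
  intro t ht
  obtain ⟨hc, hprc, hpoa, hpoa'⟩ := durRun_invariant d hd pre t
  constructor
  · intro h s hs hs'
    have := hpoa h
    exact cnt_run pre t s hs' (by omega)
  · intro h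
    exact hpoa' (by omega) (cnt_of_run pre t d (by omega) h)
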